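/- arXiv:2601.20074 — 2 statements merged into one kernel-verified Lean document; each statement's English description precedes it below -/
import Mathlib

section
/- Let dA, dB ≥ 1 and let ψ, φ : EuclideanSpace ℂ (Fin dA × Fin dB) be unit vectors with ⟪φ, ψ⟫ = 0. Then there exists an orthonormal basis (v_i)_{i : Fin dA} of EuclideanSpace ℂ (Fin dA) such that for every i, the conditional states satisfy ⟪φ^{|v_i}, ψ^{|v_i}⟫ = 0. -/
local notation "⟪" x ", " y "⟫" => @inner ℂ _ _ x y

/-- The conditional state of a bipartite vector `ψ` relative to a vector `v` on the
first subsystem: `(condState ψ v) j = ∑ a, conj (v a) * ψ (a, j)`. -/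
noncomputable def condState {dA dB : ℕ} (ψ : EuclideanSpace ℂ (Fin dA × Fin dB))
    (v : EuclideanSpace ℂ (Fin dA)) : EuclideanSpace ℂ (Fin dB) :=
  WithLp.toLp 2 (fun j => ∑ a : Fin dA, (starRingEnd ℂ) (v a) * ψ (a, j))

/-!
Write `N = Tr_B |ψ⟩⟨φ|`. Then `⟪φ^{|v}, ψ^{|v}⟫ = ⟪v, N v⟫` and `tr N = ⟪φ, ψ⟫ = 0`, so it
suffices that a traceless operator `T` has zero diagonal in some orthonormal basis. By the
Toeplitz–Hausdorff theorem the numerical range of `T` is convex, hence contains the average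
`tr T / n = 0` of the diagonal entries in any orthonormal basis: there is a unit vector `u` with
`⟪u, T u⟫ = 0`. The compression of `T` to `uᗮ` is again traceless, and we recurse.
-/

open Module ComplexConjugate

section NumericalRange

variable {E : Type*} [NormedAddCommGroup E] [InnerProductSpace ℂ E]

def numericalRange (T : E →ₗ[ℂ] E) : Set ℂ :=
  {z | ∃ x : E, ‖x‖ = 1 ∧ ⟪x, T x⟫ = z}

lemma zero_mem_numericalRange_of_inner_map_self_eq_zero (T : E →ₗ[ℂ] E) {z : E} (hz : z ≠ 0)
    (h : ⟪z, T z⟫ = 0) : 0 ∈ numericalRange T :=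
  ⟨(‖z‖⁻¹ : ℂ) • z, norm_smul_inv_norm hz, by simp [h]⟩

lemma inner_map_ofReal_smul_add_ofReal_smul (T : E →ₗ[ℂ] E) (x y : E) (p q : ℝ) :
    ⟪(p : ℂ) • x + (q : ℂ) • y, T ((p : ℂ) • x + (q : ℂ) • y)⟫ =
      p ^ 2 * ⟪x, T x⟫ + p * q * (⟪x, T y⟫ + ⟪y, T x⟫) + q ^ 2 * ⟪y, T y⟫ := by
  simp only [map_add, map_smul, inner_add_left, inner_add_right, inner_smul_left,
    inner_smul_right, Complex.conj_ofReal]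
  ring

lemma eq_neg_of_ofReal_smul_add_ofReal_smul_eq_zero {x y : E} (hx : ‖x‖ = 1) (hy : ‖y‖ = 1)
    {s : ℝ} (hs : s ∈ Set.Icc (0 : ℝ) 1) (h : ((1 - s : ℝ) : ℂ) • x + (s : ℂ) • y = 0) :
    y = -x := by
  have h0 : (0 : E) ∈ segment ℝ x y := by
    refine ⟨1 - s, s, by linarith [hs.2], hs.1, by ring, ?_⟩
    simpa only [Complex.coe_smul] using h
  rw [mem_segment_iff_sameRay, zero_sub, sub_zero] at h0
  exact (h0.eq_of_norm_eq (by rw [norm_neg, hx, hy])).symm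

/-- The heart of the Toeplitz–Hausdorff theorem: on the real span of `x` and `y` the quadratic
form `z ↦ ⟪z, T z⟫` is real-valued, so it vanishes somewhere on the segment `[x, y]`. -/
lemma zero_mem_numericalRange_of_cross_im_eq_zero (T : E →ₗ[ℂ] E) {x y : E} (hx : ‖x‖ = 1)
    (hy : ‖y‖ = 1) {p q : ℝ} (hp : 0 ≤ p) (hq : q ≤ 0) (hxx : ⟪x, T x⟫ = p)
    (hyy : ⟪y, T y⟫ = q) (hxy : (⟪x, T y⟫ + ⟪y, T x⟫).im = 0) : 0 ∈ numericalRange T := by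
  set c := (⟪x, T y⟫ + ⟪y, T x⟫).re
  have hc : ⟪x, T y⟫ + ⟪y, T x⟫ = c := Complex.ext rfl hxy
  obtain ⟨s, hs, hs0⟩ :
      ∃ s ∈ Set.Icc (0 : ℝ) 1, (1 - s) ^ 2 * p + (1 - s) * s * c + s ^ 2 * q = 0 :=
    intermediate_value_Icc' zero_le_one (by fun_prop : Continuous _).continuousOn
      ⟨by simpa using hq, by simpa using hp⟩
  by_cases hz : ((1 - s : ℝ) : ℂ) • x + (s : ℂ) • y = 0
  · have hyx := eq_neg_of_ofReal_smul_add_ofReal_smul_eq_zero hx hy hs hz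
    have hqp : q = p := by simpa [hyx, hxx] using hyy.symm
    exact ⟨x, hx, by rw [hxx]; exact_mod_cast (by linarith : p = 0)⟩
  · refine zero_mem_numericalRange_of_inner_map_self_eq_zero T hz ?_
    rw [inner_map_ofReal_smul_add_ofReal_smul, hxx, hyy, hc]
    exact_mod_cast hs0

lemma Complex.exists_norm_eq_one_mul_eq_norm (d : ℂ) : ∃ w : ℂ, ‖w‖ = 1 ∧ w * d = ‖d‖ := by
  refine ⟨Complex.exp (-d.arg * Complex.I), by exact_mod_cast Complex.norm_exp_ofReal_mul_I _, ?_⟩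
  conv_lhs => rw [← Complex.norm_mul_exp_arg_mul_I d]
  rw [mul_left_comm, ← Complex.exp_add]
  simp

lemma exists_norm_eq_one_im_cross_eq_zero (T : E →ₗ[ℂ] E) (x y : E) :
    ∃ w : ℂ, ‖w‖ = 1 ∧ (⟪w • x, T y⟫ + ⟪y, T (w • x)⟫).im = 0 := by
  obtain ⟨w, hw, hwd⟩ := Complex.exists_norm_eq_one_mul_eq_norm (⟪y, T x⟫ - conj ⟪x, T y⟫)
  refine ⟨w, hw, ?_⟩
  have him := congrArg Complex.im hwd
  simp only [map_smul, inner_smul_left, inner_smul_right, Complex.add_im, Complex.mul_im,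
    Complex.conj_re, Complex.conj_im, Complex.sub_im, Complex.sub_re, Complex.ofReal_im] at him ⊢
  linarith

lemma zero_mem_numericalRange_of_nonneg_of_nonpos (T : E →ₗ[ℂ] E) {x y : E} (hx : ‖x‖ = 1)
    (hy : ‖y‖ = 1) {p q : ℝ} (hp : 0 ≤ p) (hq : q ≤ 0) (hxx : ⟪x, T x⟫ = p)
    (hyy : ⟪y, T y⟫ = q) : 0 ∈ numericalRange T := by
  obtain ⟨w, hw, hcross⟩ := exists_norm_eq_one_im_cross_eq_zero T x y
  refine zero_mem_numericalRange_of_cross_im_eq_zero T (by rw [norm_smul, hw, hx, one_mul]) hy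
    hp hq ?_ hyy hcross
  rw [map_smul, inner_smul_left, inner_smul_right, hxx, ← mul_assoc, Complex.conj_mul', hw]
  simp

theorem convex_numericalRange (T : E →ₗ[ℂ] E) : Convex ℝ (numericalRange T) := by
  rintro _ ⟨x, hx, rfl⟩ _ ⟨y, hy, rfl⟩ a b ha hb hab
  set α := ⟪x, T x⟫
  set β := ⟪y, T y⟫
  by_cases hαβ : α = β
  · exact ⟨x, hx, by rw [← hαβ, Convex.combo_self hab]⟩
  set γ := a • α + b • β
  have hδ : α - β ≠ 0 := sub_ne_zero.2 hαβ
  -- Shift `γ` to `0` and rescale so that `α, β` become the reals `b ≥ 0` and `-a ≤ 0`.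
  set S := (α - β)⁻¹ • (T - γ • LinearMap.id)
  have hS : ∀ z : E, ‖z‖ = 1 → ⟪z, S z⟫ = (α - β)⁻¹ * (⟪z, T z⟫ - γ) := by
    intro z hz
    simp [S, inner_self_eq_norm_sq_to_K, hz]
  have hγ : γ = a * α + b * β := by simp [γ, Complex.real_smul]
  have hab' : (a : ℂ) + b = 1 := by exact_mod_cast hab
  obtain ⟨u, hu, hSu⟩ := zero_mem_numericalRange_of_nonneg_of_nonpos S hx hy hb (neg_nonpos.2 ha)
    (by rw [hS x hx, hγ]; field_simp; linear_combination (-α) * hab')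
    (by rw [hS y hy, hγ]; field_simp; push_cast; linear_combination (-β) * hab')
  refine ⟨u, hu, ?_⟩
  rw [hS u hu, mul_eq_zero, sub_eq_zero] at hSu
  exact hSu.resolve_left (inv_ne_zero hδ)

lemma zero_mem_numericalRange_of_trace_eq_zero [FiniteDimensional ℂ E] [Nontrivial E]
    {T : E →ₗ[ℂ] E} (hT : T.trace ℂ E = 0) : 0 ∈ numericalRange T := by
  let b := stdOrthonormalBasis ℂ E
  have hmem := (convex_numericalRange T).centerMass_mem (t := Finset.univ)
    (w := fun _ => (1 : ℝ)) (z := fun i => ⟪b i, T (b i)⟫) (fun _ _ => zero_le_one)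
    (by simp [Module.finrank_pos]) (fun i _ => ⟨b i, b.orthonormal.1 i, rfl⟩)
  simpa [Finset.centerMass, ← LinearMap.trace_eq_sum_inner, hT] using hmem

noncomputable def compression (K : Submodule ℂ E) [K.HasOrthogonalProjection] (T : E →ₗ[ℂ] E) :
    K →ₗ[ℂ] K :=
  K.orthogonalProjectionOnto.toLinearMap ∘ₗ T ∘ₗ K.subtype

lemma inner_compression (K : Submodule ℂ E) [K.HasOrthogonalProjection] (T : E →ₗ[ℂ] E)
    (v w : K) : ⟪v, compression K T w⟫ = ⟪(v : E), T w⟫ :=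
  Submodule.inner_orthogonalProjectionOnto_eq_of_mem_left v (T w)

lemma orthonormal_cons_orthogonal_span_singleton {u : E} (hu : ‖u‖ = 1) {n : ℕ}
    {f : Fin n → (ℂ ∙ u)ᗮ} (hf : Orthonormal ℂ f) :
    Orthonormal ℂ (Fin.cons u (fun i => (f i : E)) : Fin (n + 1) → E) := by
  have huf : ∀ i, ⟪u, (f i : E)⟫ = 0 := fun i =>
    Submodule.inner_right_of_mem_orthogonal (Submodule.mem_span_singleton_self u) (f i).2
  refine ⟨Fin.cases hu fun i => hf.1 i, ?_⟩
  intro i j hij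
  induction i using Fin.cases <;> induction j using Fin.cases
  · exact absurd rfl hij
  · exact huf _
  · simpa [inner_eq_zero_symm] using huf _
  · simpa using hf.2 (Fin.succ_injective _ |>.ne_iff.1 hij)

variable [FiniteDimensional ℂ E]

lemma exists_orthonormalBasis_cons {u : E} (hu : ‖u‖ = 1) {n : ℕ}
    (f : OrthonormalBasis (Fin n) ℂ (ℂ ∙ u)ᗮ) :
    ∃ b : OrthonormalBasis (Fin (n + 1)) ℂ E, ⇑b = Fin.cons u (fun i => (f i : E)) := by
  have hv := orthonormal_cons_orthogonal_span_singleton hu f.orthonormal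
  have hcard : Fintype.card (Fin (n + 1)) = finrank ℂ E := by
    rw [← (ℂ ∙ u).finrank_add_finrank_orthogonal,
      finrank_span_singleton (by simp [← norm_ne_zero_iff, hu]), finrank_eq_card_basis f.toBasis,
      Fintype.card_fin, Fintype.card_fin, add_comm]
  exact ⟨(basisOfOrthonormalOfCardEqFinrank hv hcard).toOrthonormalBasis
    (by rwa [coe_basisOfOrthonormalOfCardEqFinrank]), by simp⟩

lemma trace_eq_inner_add_trace_compression {u : E} (hu : ‖u‖ = 1) (T : E →ₗ[ℂ] E) :
    T.trace ℂ E = ⟪u, T u⟫ + (compression (ℂ ∙ u)ᗮ T).trace ℂ (ℂ ∙ u)ᗮ := by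
  let f := stdOrthonormalBasis ℂ (ℂ ∙ u)ᗮ
  obtain ⟨b, hb⟩ := exists_orthonormalBasis_cons hu f
  rw [LinearMap.trace_eq_sum_inner T b, LinearMap.trace_eq_sum_inner _ f, Fin.sum_univ_succ, hb]
  simp only [Fin.cons_zero, Fin.cons_succ, inner_compression]

theorem exists_orthonormalBasis_inner_map_self_eq_zero {n : ℕ} (hn : finrank ℂ E = n)
    {T : E →ₗ[ℂ] E} (hT : T.trace ℂ E = 0) :
    ∃ b : OrthonormalBasis (Fin n) ℂ E, ∀ i, ⟪b i, T (b i)⟫ = 0 := by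
  induction n generalizing E with
  | zero => exact ⟨(stdOrthonormalBasis ℂ E).reindex (finCongr hn), fun i => i.elim0⟩
  | succ n ih =>
    have : Nontrivial E := Module.nontrivial_of_finrank_eq_succ hn
    obtain ⟨u, hu, hTu⟩ := zero_mem_numericalRange_of_trace_eq_zero hT
    have : Fact (finrank ℂ E = n + 1) := ⟨hn⟩
    have hu0 : u ≠ 0 := ne_zero_of_norm_ne_zero (by simp [hu])
    obtain ⟨f, hf⟩ := ih (Submodule.finrank_orthogonal_span_singleton hu0)
      (T := compression (ℂ ∙ u)ᗮ T)
      (by rwa [trace_eq_inner_add_trace_compression hu, hTu, zero_add] at hT)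
    obtain ⟨b, hb⟩ := exists_orthonormalBasis_cons hu f
    refine ⟨b, Fin.cases ?_ fun i => ?_⟩
    · rwa [hb, Fin.cons_zero]
    · rw [hb, Fin.cons_succ, ← inner_compression]
      exact hf i

end NumericalRange

/-- The partial trace over the second factor of the operator `|ψ⟩⟨φ|`. -/
noncomputable def partialTraceOuter {α β : Type*} [Fintype β] (ψ φ : EuclideanSpace ℂ (α × β)) :
    Matrix α α ℂ :=
  Matrix.of fun a c => ∑ j, ψ (a, j) * conj (φ (c, j))

lemma trace_partialTraceOuter {α β : Type*} [Fintype α] [Fintype β]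
    (ψ φ : EuclideanSpace ℂ (α × β)) : (partialTraceOuter ψ φ).trace = ⟪φ, ψ⟫ := by
  simp [partialTraceOuter, Matrix.trace, PiLp.inner_apply, Fintype.sum_prod_type]

lemma inner_condState_condState {dA dB : ℕ} (ψ φ : EuclideanSpace ℂ (Fin dA × Fin dB))
    (v : EuclideanSpace ℂ (Fin dA)) :
    ⟪condState φ v, condState ψ v⟫ = ⟪v, Matrix.toEuclideanLin (partialTraceOuter ψ φ) v⟫ := by
  simp only [condState, partialTraceOuter, PiLp.inner_apply, Matrix.ofLp_toLpLin,
    Matrix.toLin'_apply, Matrix.mulVec, dotProduct, Matrix.of_apply, RCLike.inner_apply,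
    map_sum, map_mul, Complex.conj_conj, Finset.mul_sum, Finset.sum_mul]
  rw [Finset.sum_comm_cycle]
  refine Finset.sum_congr rfl fun a _ => ?_
  rw [Finset.sum_comm]
  exact Finset.sum_congr rfl fun c _ => Finset.sum_congr rfl fun j _ => by ring

theorem exists_orthonormalBasis_condState_orthogonal_general (dA dB : ℕ)
    (ψ φ : EuclideanSpace ℂ (Fin dA × Fin dB)) (horth : ⟪φ, ψ⟫ = 0) :
    ∃ v : OrthonormalBasis (Fin dA) ℂ (EuclideanSpace ℂ (Fin dA)),
      ∀ i : Fin dA, ⟪condState φ (v i), condState ψ (v i)⟫ = 0 := by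
  have hT : (Matrix.toEuclideanLin (partialTraceOuter ψ φ)).trace ℂ _ = 0 := by
    rw [Matrix.toEuclideanLin_eq_toLin_orthonormal, Matrix.trace_toLin_eq,
      trace_partialTraceOuter, horth]
  obtain ⟨v, hv⟩ := exists_orthonormalBasis_inner_map_self_eq_zero finrank_euclideanSpace_fin hT
  exact ⟨v, fun i => by rw [inner_condState_condState, hv i]⟩

/-- Walgate–Short–Hardy–Vedral: for any two orthogonal bipartite pure states there is an
orthonormal basis of Alice's system such that all corresponding conditional states of
Bob's system are orthogonal. -/
theorem exists_orthonormalBasis_condState_orthogonal (dA dB : ℕ) (hdA : 1 ≤ dA)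
    (hdB : 1 ≤ dB) (ψ φ : EuclideanSpace ℂ (Fin dA × Fin dB))
    (hψ : ‖ψ‖ = 1) (hφ : ‖φ‖ = 1) (horth : ⟪φ, ψ⟫ = 0) :
    ∃ v : OrthonormalBasis (Fin dA) ℂ (EuclideanSpace ℂ (Fin dA)),
      ∀ i : Fin dA, ⟪condState φ (v i), condState ψ (v i)⟫ = 0 :=
  exists_orthonormalBasis_condState_orthogonal_general dA dB ψ φ horth
end

section
/- Let dA ≥ 1, let E be a complex inner product space that is a Hilbert space, and let ψ, φ : Fin dA → E satisfy ∑_{a} ⟪φ a, ψ a⟫ = 0 (orthogonality of the corresponding vectors in the ℓ²-direct sum of dA copies of E). Then there exists an orthonormal basis (v_i)_{i : Fin dA} of EuclideanSpace ℂ (Fin dA) such that for every i, ⟪∑_a conj (v_i a) • φ a, ∑_a conj (v_i a) • ψ a⟫ = 0 in E. -/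
local notation "⟪" x ", " y "⟫" => @inner ℂ _ _ x y

/-!
The overlap of the conditional states of `φ` and `ψ` relative to `v` is `⟪T v, v⟫` for the
operator `T` on `ℂ^dA` with matrix `⟪ψ b, φ a⟫`, whose trace is the conjugate of
`∑ a, ⟪φ a, ψ a⟫ = 0`. So it suffices that a trace-zero operator has an orthonormal basis with
vanishing diagonal `⟪f i, T (f i)⟫`. By the Toeplitz–Hausdorff argument in dimension two, the
numerical range contains the segment between any two diagonal entries; inducting on the dimension
by compressing `T` to the orthogonal complement of a unit vector, it contains the average
`tr T / n = 0`. A unit vector `v` with `⟪v, T v⟫ = 0` then splits off, and the compression of `T`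
to `vᗮ` again has trace zero.
-/

open ComplexConjugate Module

namespace Complex

theorem exists_norm_eq_one_im_mul_add_conj_mul_eq_zero (p q : ℂ) :
    ∃ z : ℂ, ‖z‖ = 1 ∧ (z * p + conj z * q).im = 0 := by
  set w := p - conj q
  refine ⟨exp (↑(-arg w) * I), norm_exp_ofReal_mul_I _, ?_⟩
  set z := exp (↑(-arg w) * I)
  have hzw : z * w = ‖w‖ := by
    conv_lhs => rw [← norm_mul_exp_arg_mul_I w]
    rw [mul_left_comm, ← exp_add]
    simp
  have hconj : conj z * q = conj (z * conj q) := by simp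
  rw [hconj, add_im, conj_im, ← sub_eq_add_neg, ← sub_im, ← mul_sub, hzw, ofReal_im]

/-- The numerical range of a `2 × 2` matrix `!![α, p; q, β]` contains the segment `[α, β]`. -/
theorem exists_unit_pair_quadForm_eq_segment (α β p q : ℂ) {t : ℝ} (ht₀ : 0 ≤ t) (ht₁ : t ≤ 1) :
    ∃ c d : ℂ, conj c * c + conj d * d = 1 ∧
      conj c * c * α + conj c * d * p + conj d * c * q + conj d * d * β =
        t * α + (1 - t) * β := by
  by_cases hαβ : α = β
  · exact ⟨1, 0, by simp, by subst hαβ; simp; ring⟩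
  have hγ : α - β ≠ 0 := sub_ne_zero.mpr hαβ
  -- a phase `z` making the off-diagonal contribution `z p + z̄ q` a real multiple of `α - β`
  obtain ⟨z, hz, hzim⟩ :=
    exists_norm_eq_one_im_mul_add_conj_mul_eq_zero (p / (α - β)) (q / (α - β))
  set r := (z * (p / (α - β)) + conj z * (q / (α - β))).re
  have hr : z * p + conj z * q = r * (α - β) := by
    have : z * (p / (α - β)) + conj z * (q / (α - β)) = r := ext rfl (by simpa using hzim)
    rw [← this]
    field_simp
  have hzz : conj z * z = 1 := by simp [conj_mul', hz]
  -- along `(c, d) = (cos θ, z sin θ)` the form equals `β + (cos² θ + r cos θ sin θ) (α - β)`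
  obtain ⟨θ, hθ⟩ : ∃ θ : ℝ, Real.cos θ ^ 2 + r * Real.cos θ * Real.sin θ = t :=
    mem_range_of_exists_le_of_exists_ge
      (f := fun θ => Real.cos θ ^ 2 + r * Real.cos θ * Real.sin θ)
      (by fun_prop) ⟨Real.pi / 2, by simpa using ht₀⟩ ⟨0, by simpa using ht₁⟩
  have hθ' : (Real.cos θ : ℂ) ^ 2 + r * Real.cos θ * Real.sin θ = t := by exact_mod_cast hθ
  have hpyth : (Real.cos θ : ℂ) ^ 2 + (Real.sin θ : ℂ) ^ 2 = 1 := by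
    exact_mod_cast Real.cos_sq_add_sin_sq θ
  refine ⟨Real.cos θ, z * Real.sin θ, ?_, ?_⟩
  · simp only [map_mul, conj_ofReal]
    linear_combination (Real.sin θ : ℂ) ^ 2 * hzz + hpyth
  · simp only [map_mul, conj_ofReal]
    linear_combination (Real.cos θ * Real.sin θ : ℂ) * hr + (Real.sin θ : ℂ) ^ 2 * β * hzz
      + (α - β) * hθ' + β * hpyth

end Complex

section InnerProductSpace

variable {𝕜 V : Type*} [RCLike 𝕜] [NormedAddCommGroup V] [InnerProductSpace 𝕜 V]

open scoped InnerProductSpace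

theorem orthonormal_fin_cons {n : ℕ} {v : V} {g : Fin n → V} (hv : ‖v‖ = 1)
    (hg : Orthonormal 𝕜 g) (hvg : ∀ i, ⟪v, g i⟫_𝕜 = 0) :
    Orthonormal 𝕜 (Fin.cons v g : Fin (n + 1) → V) := by
  classical
  rw [orthonormal_iff_ite] at hg ⊢
  intro i j
  cases i using Fin.cases <;> cases j using Fin.cases <;>
    simp [hv, hg, hvg, inner_eq_zero_symm.mp (hvg _), eq_comm (a := (0 : Fin (n + 1)))]

theorem exists_orthonormalBasis_fin_cons [FiniteDimensional 𝕜 V] {n : ℕ} {v : V}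
    (hv : ‖v‖ = 1) (g : OrthonormalBasis (Fin n) 𝕜 (𝕜 ∙ v)ᗮ) :
    ∃ f : OrthonormalBasis (Fin (n + 1)) 𝕜 V, ⇑f = Fin.cons v fun i => (g i : V) := by
  have hf : Orthonormal 𝕜 (Fin.cons v fun i => (g i : V) : Fin (n + 1) → V) :=
    orthonormal_fin_cons hv (g.orthonormal.comp_linearIsometry (𝕜 ∙ v)ᗮ.subtypeₗᵢ)
      fun i => Submodule.inner_right_of_mem_orthogonal (Submodule.mem_span_singleton_self v)
        (g i).2
  have hcard : Fintype.card (Fin (n + 1)) = finrank 𝕜 V := by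
    rw [← (𝕜 ∙ v).finrank_add_finrank_orthogonal,
      finrank_span_singleton (norm_pos_iff.mp (hv ▸ one_pos)), finrank_eq_card_basis g.toBasis,
      Fintype.card_fin, Fintype.card_fin, add_comm]
  exact ⟨OrthonormalBasis.mk hf (hf.linearIndependent.span_eq_top_of_card_eq_finrank hcard).ge,
    OrthonormalBasis.coe_mk _ _⟩

theorem finrank_orthogonal_span_singleton_of_finrank_eq_succ {n : ℕ}
    (hn : finrank 𝕜 V = n + 1) {v : V} (hv : v ≠ 0) : finrank 𝕜 (𝕜 ∙ v)ᗮ = n :=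
  have : Fact (finrank 𝕜 V = n + 1) := ⟨hn⟩
  Submodule.finrank_orthogonal_span_singleton hv

theorem exists_norm_eq_one_of_finrank_eq_succ {n : ℕ} (hn : finrank 𝕜 V = n + 1) :
    ∃ e : V, ‖e‖ = 1 :=
  have : Nontrivial V := Module.nontrivial_of_finrank_eq_succ hn
  have ⟨_, hx⟩ := exists_ne (0 : V)
  ⟨_, norm_smul_inv_norm (𝕜 := 𝕜) hx⟩

namespace LinearMap

noncomputable def compression (T : V →ₗ[𝕜] V) (K : Submodule 𝕜 V) [K.HasOrthogonalProjection] :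
    K →ₗ[𝕜] K :=
  K.orthogonalProjectionOnto.toLinearMap ∘ₗ T ∘ₗ K.subtype

theorem inner_compression_apply (T : V →ₗ[𝕜] V) (K : Submodule 𝕜 V) [K.HasOrthogonalProjection]
    (x y : K) : ⟪x, T.compression K y⟫_𝕜 = ⟪(x : V), T y⟫_𝕜 :=
  K.inner_orthogonalProjectionOnto_eq_of_mem_left x (T y)

theorem trace_eq_inner_add_trace_compression [FiniteDimensional 𝕜 V] (T : V →ₗ[𝕜] V) {v : V}
    (hv : ‖v‖ = 1) : trace 𝕜 V T = ⟪v, T v⟫_𝕜 + trace 𝕜 _ (T.compression (𝕜 ∙ v)ᗮ) := by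
  let g := stdOrthonormalBasis 𝕜 (𝕜 ∙ v)ᗮ
  obtain ⟨f, hf⟩ := exists_orthonormalBasis_fin_cons hv g
  rw [trace_eq_sum_inner T f, trace_eq_sum_inner _ g, Fin.sum_univ_succ, hf]
  simp only [Fin.cons_zero, Fin.cons_succ, inner_compression_apply]

end LinearMap

end InnerProductSpace

namespace LinearMap

variable {V : Type*} [NormedAddCommGroup V] [InnerProductSpace ℂ V]

theorem exists_norm_eq_one_inner_map_self_eq_segment (T : V →ₗ[ℂ] V) {u w : V} (hu : ‖u‖ = 1)
    (hw : ‖w‖ = 1) (huw : ⟪u, w⟫ = 0) {t : ℝ} (ht₀ : 0 ≤ t) (ht₁ : t ≤ 1) :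
    ∃ x : V, ‖x‖ = 1 ∧ ⟪x, T x⟫ = t * ⟪u, T u⟫ + (1 - t) * ⟪w, T w⟫ := by
  obtain ⟨c, d, hcd, hT⟩ :=
    Complex.exists_unit_pair_quadForm_eq_segment ⟪u, T u⟫ ⟪w, T w⟫ ⟪u, T w⟫ ⟪w, T u⟫ ht₀ ht₁
  have hwu : ⟪w, u⟫ = 0 := inner_eq_zero_symm.mp huw
  have hx : ⟪c • u + d • w, c • u + d • w⟫ = 1 := by
    simp only [inner_add_left, inner_add_right, inner_smul_left, inner_smul_right, huw, hwu,
      inner_self_eq_one_of_norm_eq_one hu, inner_self_eq_one_of_norm_eq_one hw]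
    linear_combination hcd
  refine ⟨c • u + d • w, ?_, ?_⟩
  · refine (pow_eq_one_iff_of_nonneg (norm_nonneg _) two_ne_zero).mp ?_
    rw [@norm_sq_eq_re_inner ℂ, hx, RCLike.one_re]
  · simp only [map_add, map_smul, inner_add_left, inner_add_right, inner_smul_left,
      inner_smul_right]
    linear_combination hT

theorem exists_norm_eq_one_inner_map_self_eq_trace_div [FiniteDimensional ℂ V] {n : ℕ}
    (hn : finrank ℂ V = n + 1) (T : V →ₗ[ℂ] V) :
    ∃ x : V, ‖x‖ = 1 ∧ ⟪x, T x⟫ = trace ℂ V T / (n + 1) := by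
  induction n generalizing V with
  | zero =>
    obtain ⟨e, he⟩ := exists_norm_eq_one_of_finrank_eq_succ hn
    have : Subsingleton (ℂ ∙ e)ᗮ := finrank_zero_iff.mp <|
      finrank_orthogonal_span_singleton_of_finrank_eq_succ hn (norm_pos_iff.mp (he ▸ one_pos))
    refine ⟨e, he, ?_⟩
    rw [T.trace_eq_inner_add_trace_compression he, Subsingleton.elim (T.compression _) 0]
    simp
  | succ n ih =>
    obtain ⟨e, he⟩ := exists_norm_eq_one_of_finrank_eq_succ hn
    obtain ⟨u, hu, hTu⟩ := ih (T := T.compression (ℂ ∙ e)ᗮ)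
      (finrank_orthogonal_span_singleton_of_finrank_eq_succ hn (norm_pos_iff.mp (he ▸ one_pos)))
    -- as `tr T = ⟪e, T e⟫ + tr T_K`, the weight `t = (n + 1) / (n + 2)` gives `tr T / (n + 2)`
    obtain ⟨x, hx, hTx⟩ := T.exists_norm_eq_one_inner_map_self_eq_segment (u := u) (w := e)
      (by simpa using hu) he (Submodule.inner_left_of_mem_orthogonal
        (Submodule.mem_span_singleton_self e) u.2) (t := (n + 1) / (n + 1 + 1))
      (by positivity) (div_le_one_of_le₀ (by linarith) (by positivity))
    refine ⟨x, hx, ?_⟩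
    rw [hTx, T.trace_eq_inner_add_trace_compression he, ← inner_compression_apply, hTu]
    have hn₂ : (n : ℂ) + 1 + 1 ≠ 0 := by norm_cast
    push_cast
    field_simp
    ring

theorem exists_orthonormalBasis_inner_map_self_eq_zero [FiniteDimensional ℂ V] {n : ℕ}
    (hn : finrank ℂ V = n) (T : V →ₗ[ℂ] V) (hT : trace ℂ V T = 0) :
    ∃ f : OrthonormalBasis (Fin n) ℂ V, ∀ i, ⟪f i, T (f i)⟫ = 0 := by
  induction n generalizing V with
  | zero => exact ⟨(stdOrthonormalBasis ℂ V).reindex (finCongr hn), fun i => i.elim0⟩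
  | succ n ih =>
    obtain ⟨v, hv, hTv⟩ := exists_norm_eq_one_inner_map_self_eq_trace_div hn T
    rw [hT, zero_div] at hTv
    have hK :=
      finrank_orthogonal_span_singleton_of_finrank_eq_succ hn (norm_pos_iff.mp (hv ▸ one_pos))
    have hTK : trace ℂ _ (T.compression (ℂ ∙ v)ᗮ) = 0 := by
      simpa [hT, hTv] using (T.trace_eq_inner_add_trace_compression hv).symm
    obtain ⟨g, hg⟩ := ih hK _ hTK
    obtain ⟨f, hf⟩ := exists_orthonormalBasis_fin_cons hv g
    refine ⟨f, fun i => ?_⟩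
    cases i using Fin.cases with
    | zero => simpa [hf] using hTv
    | succ i => rw [hf, Fin.cons_succ, ← inner_compression_apply]; exact hg i

end LinearMap

section ConditionalState

variable {ι E : Type*} [Fintype ι] [DecidableEq ι] [NormedAddCommGroup E] [InnerProductSpace ℂ E]

theorem inner_sum_conj_smul_eq_inner_toEuclideanLin (φ ψ : ι → E) (v : EuclideanSpace ℂ ι) :
    ⟪∑ a, conj (v a) • φ a, ∑ a, conj (v a) • ψ a⟫ =
      ⟪Matrix.toEuclideanLin (Matrix.of fun a b => ⟪ψ b, φ a⟫) v, v⟫ := by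
  simp only [sum_inner, inner_sum, inner_smul_left, inner_smul_right, PiLp.inner_apply,
    Matrix.toLpLin_apply, Matrix.mulVec, dotProduct, Matrix.of_apply, RCLike.inner_apply, map_sum,
    map_mul, inner_conj_symm, Complex.conj_conj, Finset.mul_sum]
  rw [Finset.sum_comm]
  exact Finset.sum_congr rfl fun a _ => Finset.sum_congr rfl fun b _ => by ring

theorem trace_toEuclideanLin_of_inner (φ ψ : ι → E) :
    LinearMap.trace ℂ _ (Matrix.toEuclideanLin (Matrix.of fun a b => ⟪ψ b, φ a⟫)) =
      conj (∑ a, ⟪φ a, ψ a⟫) := by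
  rw [LinearMap.trace_eq_sum_inner _ (EuclideanSpace.basisFun ι ℂ), map_sum]
  refine Finset.sum_congr rfl fun a _ => ?_
  rw [← inner_conj_symm, ← inner_sum_conj_smul_eq_inner_toEuclideanLin]
  simp

end ConditionalState

theorem exists_orthonormalBasis_condState_orthogonal_hilbert_general (dA : ℕ)
    {E : Type*} [NormedAddCommGroup E] [InnerProductSpace ℂ E]
    (ψ φ : Fin dA → E) (horth : ∑ a : Fin dA, ⟪φ a, ψ a⟫ = 0) :
    ∃ v : OrthonormalBasis (Fin dA) ℂ (EuclideanSpace ℂ (Fin dA)),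
      ∀ i : Fin dA,
        ⟪∑ a : Fin dA, (starRingEnd ℂ) (v i a) • φ a,
          ∑ a : Fin dA, (starRingEnd ℂ) (v i a) • ψ a⟫ = 0 := by
  obtain ⟨v, hv⟩ := LinearMap.exists_orthonormalBasis_inner_map_self_eq_zero
    finrank_euclideanSpace_fin (Matrix.toEuclideanLin (Matrix.of fun a b => ⟪ψ b, φ a⟫))
    (by rw [trace_toEuclideanLin_of_inner, horth, map_zero])
  exact ⟨v, fun i => by
    rw [inner_sum_conj_smul_eq_inner_toEuclideanLin, inner_eq_zero_symm, hv i]⟩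

/-- Walgate et al. theorem for a finite-dimensional system `A` and an arbitrary
(possibly infinite-dimensional) Hilbert space `B = E`: if the bipartite vectors
`ψ, φ : Fin dA → E` are orthogonal (in the ℓ²-direct sum inner product), then there is
an orthonormal basis `(v i)` of `ℂ^dA` such that all conditional states are orthogonal. -/
theorem exists_orthonormalBasis_condState_orthogonal_hilbert (dA : ℕ) (hdA : 1 ≤ dA)
    {E : Type*} [NormedAddCommGroup E] [InnerProductSpace ℂ E] [CompleteSpace E]
    (ψ φ : Fin dA → E) (horth : ∑ a : Fin dA, ⟪φ a, ψ a⟫ = 0) :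
    ∃ v : OrthonormalBasis (Fin dA) ℂ (EuclideanSpace ℂ (Fin dA)),
      ∀ i : Fin dA,
        ⟪∑ a : Fin dA, (starRingEnd ℂ) (v i a) • φ a,
          ∑ a : Fin dA, (starRingEnd ℂ) (v i a) • ψ a⟫ = 0 :=
  exists_orthonormalBasis_condState_orthogonal_hilbert_general dA ψ φ horth
end
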